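/- Let P = (n_1 ≥ ... ≥ n_k) and P' be partitions of d, and suppose P is a strict refinement of P' (P < P'). Then dim Hom_{S_d}(Ind_{S_P'}^{S_d} 1, Ind_{S_P}^{S_d} 1) ≥ 1, and there exists an irreducible representation of S_d occurring in Ind_{S_P}^{S_d} 1 but not in Ind_{S_P'}^{S_d} 1. -/

import Mathlib

/-!
Grouping the blocks of `P` into those of `P'` is an `S_d`-map from `P`-tabloids onto
`P'`-tabloids, and pulling functions back along it is a nonzero homomorphism
`Ind_{S_P'} 1 → Ind_{S_P} 1`.

For the second claim pick a point `c i` in each of the `k` blocks of one `P`-tabloid and let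
`a = ∑ sign π • π` be the antisymmetrizer of the copy of `S_k` permuting the `c i`. A
`P'`-tabloid has only `l < k` blocks, so two of the `c i` lie in the same block and the
transposition exchanging them fixes the tabloid: `a` acts as zero on `Ind_{S_P'} 1`. On the
other hand `a` does not kill the indicator of the chosen `P`-tabloid. By Maschke's theorem a
minimal subrepresentation of `Ind_{S_P} 1` not killed by `a` is irreducible, and an equivariant
map from it to `Ind_{S_P'} 1` commutes with `a`, so its kernel contains a nonzero vector
`a • w` and hence everything.
-/

/-- Words of length `d` in `n` letters: the standard basis of `E^{⊗d}` for `E = ℂⁿ`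
consists of the pure tensors `e_{w 1} ⊗ ... ⊗ e_{w d}` for words `w`. -/
def Word (d n : ℕ) : Type := Fin d → Fin n

lemma card_filter_comp {d k : ℕ} (f : Fin d → Fin k) (e : Equiv.Perm (Fin d)) (i : Fin k) :
    (Finset.univ.filter fun x => f (e x) = i).card =
      (Finset.univ.filter fun x => f x = i).card := by
  apply Finset.card_bij (fun x _ => e x)
  · intro a ha; simp only [Finset.mem_filter, Finset.mem_univ, true_and] at ha ⊢; exact ha
  · intro a _ b _ h; exact e.injective h
  · intro b hb
    refine ⟨e.symm b, ?_, by simp⟩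
    simp only [Finset.mem_filter, Finset.mem_univ, true_and] at hb ⊢
    rw [Equiv.apply_symm_apply]; exact hb

/-- `S_d` acts on words by permuting the positions (tensor factors). -/
instance (d n : ℕ) : MulAction (Equiv.Perm (Fin d)) (Word d n) where
  smul σ w := (w : Fin d → Fin n) ∘ ⇑σ⁻¹
  one_smul w := by
    funext i; show w ((1 : Equiv.Perm (Fin d))⁻¹ i) = w i; simp
  mul_smul σ τ w := by
    funext i; show w ((σ * τ)⁻¹ i) = w (τ⁻¹ (σ⁻¹ i)); simp [Equiv.Perm.mul_apply]

/-- The permutation representation on complex-valued functions on a `G`-set `X`: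
`(g • f) x = f (g⁻¹ • x)`. For `X` the set of words this is `E^{⊗d}`, and for `X` a set of
cosets this is an induced representation `Ind 1`. -/
noncomputable def permActionRep (G : Type) [Group G] (X : Type) [MulAction G X] :
    Representation ℂ G (X → ℂ) where
  toFun g := LinearMap.funLeft ℂ ℂ (fun x => g⁻¹ • x)
  map_one' := by
    ext f x
    simp
  map_mul' g h := by
    ext f x
    simp [Module.End.mul_apply, mul_smul]

/-- The permutation representation of `S_d` on `E^{⊗d}` (for `E = ℂⁿ`), permuting the
tensor factors of the basis of pure tensors indexed by words. -/
noncomputable def wordRep (n d : ℕ) :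
    Representation ℂ (Equiv.Perm (Fin d)) (Word d n → ℂ) :=
  permActionRep (Equiv.Perm (Fin d)) (Word d n)

/-- Surjections `{1,...,d} → {1,...,k}` with fibre sizes prescribed by a composition `P`;
the permutation action of `S_d` on this set realizes `Ind_{S_P}^{S_d} 1`. -/
def PTab (d k : ℕ) (P : Fin k → ℕ) : Type :=
  {f : Fin d → Fin k // ∀ i, (Finset.univ.filter fun x => f x = i).card = P i}

instance (d k : ℕ) (P : Fin k → ℕ) : MulAction (Equiv.Perm (Fin d)) (PTab d k P) where
  smul σ t := ⟨t.1 ∘ ⇑σ⁻¹, fun i => (card_filter_comp t.1 σ⁻¹ i).trans (t.2 i)⟩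
  one_smul t := Subtype.ext (by
    funext i; show t.1 ((1 : Equiv.Perm (Fin d))⁻¹ i) = t.1 i; simp)
  mul_smul σ τ t := Subtype.ext (by
    funext i; show t.1 ((σ * τ)⁻¹ i) = t.1 (τ⁻¹ (σ⁻¹ i)); simp [Equiv.Perm.mul_apply])

/-- The permutation module `Ind_{S_P}^{S_d} 1` of a composition `P` of `d`. -/
noncomputable def indRep (d k : ℕ) (P : Fin k → ℕ) :
    Representation ℂ (Equiv.Perm (Fin d)) (PTab d k P → ℂ) :=
  permActionRep (Equiv.Perm (Fin d)) (PTab d k P)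

/-- The space `Hom_G(V, W)` of `G`-equivariant linear maps between two representations. -/
def EqvHom {G V W : Type} [Group G] [AddCommGroup V] [Module ℂ V]
    [AddCommGroup W] [Module ℂ W]
    (ρV : Representation ℂ G V) (ρW : Representation ℂ G W) :
    Submodule ℂ (V →ₗ[ℂ] W) where
  carrier := {φ | ∀ g, φ ∘ₗ ρV g = ρW g ∘ₗ φ}
  zero_mem' := fun g => by ext v; simp
  add_mem' := fun {φ ψ} hφ hψ g => by
    ext v
    have h1 := LinearMap.congr_fun (hφ g) v
    have h2 := LinearMap.congr_fun (hψ g) v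
    simp only [LinearMap.comp_apply, LinearMap.add_apply] at h1 h2 ⊢
    rw [h1, h2, map_add]
  smul_mem' := fun c φ hφ g => by
    ext v
    have h := LinearMap.congr_fun (hφ g) v
    simp only [LinearMap.comp_apply, LinearMap.smul_apply] at h ⊢
    rw [h, map_smul]

/-- A representation is irreducible if it is nonzero and has no proper nonzero
invariant subspaces. -/
def Representation.IsIrreducible' {G V : Type} [Group G] [AddCommGroup V] [Module ℂ V]
    (ρ : Representation ℂ G V) : Prop :=
  Nontrivial V ∧ ∀ U : Submodule ℂ V, (∀ g, U.map (ρ g) ≤ U) → U = ⊥ ∨ U = ⊤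

/-- `P < P'`: the composition `P` is a strict refinement of `P'`, i.e. grouping the parts
of `P` along some map of index sets yields `P'`, and `P'` has strictly fewer parts. -/
def IsStrictRefinement {k l : ℕ} (P : Fin k → ℕ) (P' : Fin l → ℕ) : Prop :=
  l < k ∧ ∃ g : Fin k → Fin l, ∀ j, P' j = ∑ i ∈ Finset.univ.filter (fun i => g i = j), P i

open Equiv Equiv.Perm Finset

namespace Subrepresentation

variable {k G V : Type*} [Field k] [Monoid G] [AddCommGroup V] [Module k V]
  {ρ : Representation k G V}

instance : IsModularLattice (Subrepresentation ρ) where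
  sup_inf_le_assoc_of_le y _ h :=
    IsModularLattice.sup_inf_le_assoc_of_le (α := Submodule k V) y.toSubmodule h

instance [FiniteDimensional k V] : WellFoundedLT (Subrepresentation ρ) :=
  StrictMono.wellFoundedLT (f := toSubmodule) fun _ _ h => h

end Subrepresentation

theorem isAtom_of_not_of_forall_lt {α : Type*} [Lattice α] [BoundedOrder α] [IsModularLattice α]
    [ComplementedLattice α] {p : α → Prop} (hbot : p ⊥) (hsup : ∀ a b, p a → p b → p (a ⊔ b))
    {w : α} (hw : ¬ p w) (hlt : ∀ u < w, p u) : IsAtom w := by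
  refine ⟨fun h => hw (h ▸ hbot), fun u hu => ?_⟩
  obtain ⟨c, hc⟩ := exists_isCompl u
  by_contra hu0
  have hcw : c ⊓ w < w := by
    refine inf_le_right.lt_of_ne fun h => hu0 ?_
    exact hc.disjoint.eq_bot_of_le (hu.le.trans (h ▸ inf_le_left))
  have hsup_eq : u ⊔ c ⊓ w = w := by
    rw [← sup_inf_assoc_of_le c hu.le, hc.sup_eq_top, top_inf_eq]
  exact hw (hsup_eq ▸ hsup _ _ (hlt u hu) (hlt _ hcw))

namespace Subrepresentation

variable {G V : Type} [Group G] [AddCommGroup V] [Module ℂ V] {ρ : Representation ℂ G V}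

theorem isIrreducible'_toRepresentation_of_isAtom {W : Subrepresentation ρ} (hW : IsAtom W) :
    W.toRepresentation.IsIrreducible' := by
  have hsubtype := W.toSubmodule.injective_subtype
  refine ⟨Submodule.nontrivial_iff_ne_bot.mpr fun h => hW.1 (toSubmodule_injective h), ?_⟩
  intro U hU
  let U' : Subrepresentation ρ :=
    { toSubmodule := U.map W.toSubmodule.subtype
      apply_mem_toSubmodule := by
        rintro g _ ⟨u, hu, rfl⟩
        exact ⟨W.toRepresentation g u, hU g ⟨u, hu, rfl⟩, rfl⟩ }
  rcases hW.le_iff.mp (show U' ≤ W from Submodule.map_subtype_le _ U) with h | h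
  · left
    apply Submodule.map_injective_of_injective hsubtype
    rw [Submodule.map_bot]
    exact congrArg toSubmodule h
  · right
    apply Submodule.map_injective_of_injective hsubtype
    rw [Submodule.map_top, Submodule.range_subtype]
    exact congrArg toSubmodule h

end Subrepresentation

section EqvHom

variable {G V V' : Type} [Group G] [AddCommGroup V] [Module ℂ V] [AddCommGroup V'] [Module ℂ V']
  {ρ : Representation ℂ G V} {ρ' : Representation ℂ G V'}

theorem comp_asAlgebraHom_of_mem_eqvHom {φ : V →ₗ[ℂ] V'} (hφ : φ ∈ EqvHom ρ ρ')
    (a : MonoidAlgebra ℂ G) : φ ∘ₗ ρ.asAlgebraHom a = ρ'.asAlgebraHom a ∘ₗ φ := by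
  induction a using MonoidAlgebra.induction_on with
  | of g => simpa only [Representation.asAlgebraHom_of] using hφ g
  | add x y hx hy => simp only [map_add, LinearMap.comp_add, LinearMap.add_comp, hx, hy]
  | smul r x hx => simp only [map_smul, LinearMap.comp_smul, LinearMap.smul_comp, hx]

theorem Subrepresentation.subtype_mem_eqvHom (W : Subrepresentation ρ) :
    W.toSubmodule.subtype ∈ EqvHom W.toRepresentation ρ :=
  fun _ => rfl

theorem eq_zero_of_mem_eqvHom_of_asAlgebraHom_eq_zero (hρ : ρ.IsIrreducible') {ψ : V →ₗ[ℂ] V'}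
    (hψ : ψ ∈ EqvHom ρ ρ') {a : MonoidAlgebra ℂ G} (ha : ρ.asAlgebraHom a ≠ 0)
    (ha' : ρ'.asAlgebraHom a = 0) : ψ = 0 := by
  obtain ⟨v, hv⟩ := DFunLike.ne_iff.mp ha
  have hker : ρ.asAlgebraHom a v ∈ LinearMap.ker ψ := by
    rw [LinearMap.mem_ker, ← LinearMap.comp_apply, comp_asAlgebraHom_of_mem_eqvHom hψ, ha']
    rfl
  have hstable : ∀ g, (LinearMap.ker ψ).map (ρ g) ≤ LinearMap.ker ψ := by
    rintro g _ ⟨w, hw, rfl⟩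
    rw [LinearMap.mem_ker, ← LinearMap.comp_apply, hψ g, LinearMap.comp_apply,
      LinearMap.mem_ker.mp hw, map_zero]
  rcases hρ.2 _ hstable with h | h
  · exact (hv (by simpa [h] using hker)).elim
  · exact LinearMap.ker_eq_top.mp h

end EqvHom

theorem exists_isIrreducible'_separating {G V V' : Type} [Group G] [AddCommGroup V] [Module ℂ V]
    [FiniteDimensional ℂ V] [AddCommGroup V'] [Module ℂ V'] {ρ : Representation ℂ G V}
    [ρ.IsSemisimpleRepresentation] {ρ' : Representation ℂ G V'} {a : MonoidAlgebra ℂ G}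
    (ha : ρ.asAlgebraHom a ≠ 0) (ha' : ρ'.asAlgebraHom a = 0) :
    ∃ (Wty : Type) (_ : AddCommGroup Wty) (_ : Module ℂ Wty) (ρW : Representation ℂ G Wty),
      ρW.IsIrreducible' ∧ (∃ ψ ∈ EqvHom ρW ρ, ψ ≠ 0) ∧ (∀ ψ ∈ EqvHom ρW ρ', ψ = 0) := by
  let p : Subrepresentation ρ → Prop := fun U => U.toSubmodule ≤ LinearMap.ker (ρ.asAlgebraHom a)
  have htop : ¬ p ⊤ := fun h => ha (LinearMap.ker_eq_top.mp (top_le_iff.mp h))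
  obtain ⟨W, hW, hmin⟩ := wellFounded_lt.has_min {U | ¬ p U} ⟨⊤, htop⟩
  have hirr : W.toRepresentation.IsIrreducible' :=
    Subrepresentation.isIrreducible'_toRepresentation_of_isAtom <|
      isAtom_of_not_of_forall_lt (p := p) bot_le (fun _ _ => sup_le) hW
        fun U hU => not_not.mp fun h => hmin U h hU
  have hWa : W.toRepresentation.asAlgebraHom a ≠ 0 := by
    intro h
    refine hW fun v hv => ?_
    have := LinearMap.congr_fun (comp_asAlgebraHom_of_mem_eqvHom W.subtype_mem_eqvHom a) ⟨v, hv⟩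
    simpa [h] using this.symm
  refine ⟨W.toSubmodule, inferInstance, inferInstance, W.toRepresentation, hirr,
    ⟨_, W.subtype_mem_eqvHom, ?_⟩,
    fun ψ hψ => eq_zero_of_mem_eqvHom_of_asAlgebraHom_eq_zero hirr hψ hWa ha'⟩
  have : Nontrivial W.toSubmodule := hirr.1
  obtain ⟨w, hw⟩ := exists_ne (0 : W.toSubmodule)
  exact fun h => hw (Subtype.ext (LinearMap.congr_fun h w))

section PermutationModule

variable {G X : Type} [Group G] [MulAction G X]

theorem permActionRep_apply (g : G) (u : X → ℂ) (x : X) :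
    permActionRep G X g u x = u (g⁻¹ • x) := rfl

theorem funLeft_mem_eqvHom {Y : Type} [MulAction G Y] {f : X → Y}
    (hf : ∀ (g : G) x, f (g • x) = g • f x) :
    LinearMap.funLeft ℂ ℂ f ∈ EqvHom (permActionRep G Y) (permActionRep G X) := by
  intro g
  ext u x
  simp [permActionRep_apply, LinearMap.funLeft_apply, hf]

theorem funLeft_ne_zero {Y : Type} [Nonempty X] (f : X → Y) : LinearMap.funLeft ℂ ℂ f ≠ 0 := by
  intro h
  simpa using congrFun (LinearMap.congr_fun h fun _ => 1) (Classical.arbitrary X)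

noncomputable def antisymmetrizer {α : Type*} [Fintype α] [DecidableEq α] (Φ : Perm α →* G) :
    MonoidAlgebra ℂ G :=
  ∑ π, ((sign π : ℤ) : ℂ) • MonoidAlgebra.of ℂ G (Φ π)

variable {α : Type*} [Fintype α] [DecidableEq α] (Φ : Perm α →* G)

theorem asAlgebraHom_antisymmetrizer_apply (u : X → ℂ) (x : X) :
    (permActionRep G X).asAlgebraHom (antisymmetrizer Φ) u x =
      ∑ π, ((sign π : ℤ) : ℂ) * u ((Φ π)⁻¹ • x) := by
  simp [antisymmetrizer, LinearMap.sum_apply, permActionRep_apply]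

theorem asAlgebraHom_antisymmetrizer_eq_zero
    (h : ∀ x : X, ∃ τ : Perm α, sign τ = -1 ∧ Φ τ • x = x) :
    (permActionRep G X).asAlgebraHom (antisymmetrizer Φ) = 0 := by
  ext u x
  obtain ⟨τ, hτ, hx⟩ := h x
  have hfix : ∀ π, (Φ (τ * π))⁻¹ • x = (Φ π)⁻¹ • x := fun π => by
    rw [map_mul, mul_inv_rev, mul_smul, inv_smul_eq_iff.mpr hx.symm]
  rw [asAlgebraHom_antisymmetrizer_apply, LinearMap.zero_apply, Pi.zero_apply, ← self_eq_neg,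
    ← Finset.sum_neg_distrib]
  refine Fintype.sum_equiv (Equiv.mulLeft τ) _ _ fun π => ?_
  rw [Equiv.coe_mulLeft, hfix, Perm.sign_mul, hτ]
  push_cast
  ring

theorem asAlgebraHom_antisymmetrizer_ne_zero [DecidableEq X] {x : X}
    (hx : ∀ π, Φ π • x = x → π = 1) :
    (permActionRep G X).asAlgebraHom (antisymmetrizer Φ) ≠ 0 := by
  intro h
  have := congrFun (LinearMap.congr_fun h (Pi.single x 1)) x
  rw [asAlgebraHom_antisymmetrizer_apply, Finset.sum_eq_single 1] at this
  · simp at this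
  · intro π _ hπ
    rw [Pi.single_apply, if_neg fun h => hπ (hx π (inv_smul_eq_iff.mp h).symm), mul_zero]
  · simp

end PermutationModule

namespace PTab

variable {d k : ℕ} {P : Fin k → ℕ}

instance : Fintype (PTab d k P) := by
  unfold PTab; infer_instance

instance : DecidableEq (PTab d k P) := by
  unfold PTab; infer_instance

theorem smul_val (σ : Perm (Fin d)) (t : PTab d k P) : (σ • t).1 = t.1 ∘ ⇑σ⁻¹ := rfl

theorem nonempty (hd : ∑ i, P i = d) : Nonempty (PTab d k P) := by
  let e : Fin d ≃ Σ i, Fin (P i) := (finCongr hd.symm).trans finSigmaFinEquiv.symm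
  refine ⟨⟨fun x => (e x).1, fun i => ?_⟩⟩
  rw [Finset.card_equiv e (t := univ.filter fun s => s.1 = i) (by simp), Finset.card_filter,
    Fintype.sum_sigma]
  simp [apply_ite]

theorem surjective (hP : ∀ i, 1 ≤ P i) (t : PTab d k P) : Function.Surjective t.1 := fun i => by
  obtain ⟨x, hx⟩ := Finset.card_pos.mp ((t.2 i).symm ▸ hP i)
  exact ⟨x, (Finset.mem_filter.mp hx).2⟩

def regroup {l : ℕ} {P' : Fin l → ℕ} (g : Fin k → Fin l)
    (hg : ∀ j, P' j = ∑ i ∈ univ.filter (fun i => g i = j), P i) (t : PTab d k P) :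
    PTab d l P' :=
  ⟨g ∘ t.1, fun j => by
    rw [hg, card_eq_sum_card_fiberwise (f := t.1) (t := univ.filter fun i => g i = j)
      (fun x hx => by simpa using hx)]
    refine Finset.sum_congr rfl fun i hi => ?_
    rw [Finset.filter_filter, ← t.2 i]
    congr 1
    ext x
    simp only [Finset.mem_filter, Finset.mem_univ, true_and] at hi ⊢
    exact ⟨And.right, fun hx => ⟨(congrArg g hx).trans hi, hx⟩⟩⟩

theorem regroup_smul {l : ℕ} {P' : Fin l → ℕ} (g : Fin k → Fin l)
    (hg : ∀ j, P' j = ∑ i ∈ univ.filter (fun i => g i = j), P i) (σ : Perm (Fin d))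
    (t : PTab d k P) : regroup g hg (σ • t) = σ • regroup g hg t :=
  rfl

theorem eq_one_of_viaEmbeddingHom_smul_eq_self {c : Fin k ↪ Fin d} {t : PTab d k P}
    (hc : ∀ i, t.1 (c i) = i) (π : Perm (Fin k)) (h : viaEmbeddingHom c π • t = t) : π = 1 := by
  ext i
  have h' : (viaEmbeddingHom c π)⁻¹ • t = t := inv_smul_eq_iff.mpr h.symm
  have := congrFun (congrArg Subtype.val h') (c i)
  rw [smul_val, inv_inv, Function.comp_apply, viaEmbeddingHom_apply, viaEmbedding_apply, hc,
    hc] at this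
  rw [this, Perm.one_apply]

theorem exists_odd_viaEmbeddingHom_smul_eq_self {l : ℕ} {P' : Fin l → ℕ} (hlt : l < k)
    (c : Fin k ↪ Fin d) (t : PTab d l P') :
    ∃ τ : Perm (Fin k), sign τ = -1 ∧ viaEmbeddingHom c τ • t = t := by
  obtain ⟨a, b, hab, heq⟩ :=
    Fintype.exists_ne_map_eq_of_card_lt (fun i => t.1 (c i)) (by simpa using hlt)
  refine ⟨swap a b, sign_swap hab, Subtype.ext ?_⟩
  rw [smul_val, ← map_inv, swap_inv, viaEmbeddingHom_apply]
  funext x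
  by_cases hx : x ∈ Set.range c
  · obtain ⟨i, rfl⟩ := hx
    rw [Function.comp_apply, viaEmbedding_apply, swap_apply_def]
    split_ifs with hia hib
    · rw [hia, heq]
    · rw [hib, heq]
    · rfl
  · rw [Function.comp_apply, viaEmbedding_apply_of_notMem _ _ _ hx]

end PTab

theorem stmt15_general (d k l : ℕ) (P : Fin k → ℕ) (P' : Fin l → ℕ)
    (hP : ∀ i, 1 ≤ P i) (hd : ∑ i, P i = d)
    (href : IsStrictRefinement P P') :
    (∃ φ ∈ EqvHom (indRep d l P') (indRep d k P), φ ≠ 0) ∧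
    ∃ (Wty : Type) (_ : AddCommGroup Wty) (_ : Module ℂ Wty)
      (ρW : Representation ℂ (Equiv.Perm (Fin d)) Wty),
        ρW.IsIrreducible' ∧
        (∃ ψ ∈ EqvHom ρW (indRep d k P), ψ ≠ 0) ∧
        (∀ ψ ∈ EqvHom ρW (indRep d l P'), ψ = 0) := by
  obtain ⟨hlt, g, hg⟩ := href
  have : Nonempty (PTab d k P) := PTab.nonempty hd
  obtain ⟨c, hc⟩ := ((Classical.arbitrary (PTab d k P)).surjective hP).hasRightInverse
  let Φ := viaEmbeddingHom ⟨c, hc.injective⟩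
  refine ⟨⟨_, funLeft_mem_eqvHom (PTab.regroup_smul g hg), funLeft_ne_zero _⟩, ?_⟩
  exact exists_isIrreducible'_separating (a := antisymmetrizer Φ)
    (asAlgebraHom_antisymmetrizer_ne_zero Φ (PTab.eq_one_of_viaEmbeddingHom_smul_eq_self hc))
    (asAlgebraHom_antisymmetrizer_eq_zero Φ (PTab.exists_odd_viaEmbeddingHom_smul_eq_self hlt _))

/-- Let `P, P'` be partitions of `d` with `P` a strict refinement of `P'`
(`P < P'`). Then `dim Hom_{S_d}(Ind_{S_{P'}}^{S_d} 1, Ind_{S_P}^{S_d} 1) ≥ 1` (there is a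
nonzero equivariant map), and there is an irreducible representation of `S_d` that occurs in
`Ind_{S_P}^{S_d} 1` but not in `Ind_{S_{P'}}^{S_d} 1`. -/
theorem stmt15 (d k l : ℕ) (P : Fin k → ℕ) (P' : Fin l → ℕ)
    (hP : ∀ i, 1 ≤ P i) (hPmono : Antitone P) (hP'mono : Antitone P')
    (hd : ∑ i, P i = d) (hd' : ∑ j, P' j = d)
    (href : IsStrictRefinement P P') :
    (∃ φ ∈ EqvHom (indRep d l P') (indRep d k P), φ ≠ 0) ∧
    ∃ (Wty : Type) (_ : AddCommGroup Wty) (_ : Module ℂ Wty)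
      (ρW : Representation ℂ (Equiv.Perm (Fin d)) Wty),
        ρW.IsIrreducible' ∧
        (∃ ψ ∈ EqvHom ρW (indRep d k P), ψ ≠ 0) ∧
        (∀ ψ ∈ EqvHom ρW (indRep d l P'), ψ = 0) :=
  stmt15_general d k l P P' hP hd href
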